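/- arXiv:2408.15668 — 3 statements merged into one kernel-verified Lean document; each statement's English description precedes it below -/
import Mathlib

section
/- Let I be a nonempty finite index set, let c : I → ℝ be nonnegative, let s : I → ℝ be nonnegative, and define G(t) = (Σ_{m∈I} c_m / √(‖t‖² + s_m))² for t ∈ ℝ³ with ‖t‖ > 0. Let C ⊆ {t ∈ ℝ³ : ‖t‖ > 0} be a nonempty set and suppose t* ∈ C satisfies ‖t*‖ ≤ ‖t‖ for all t ∈ C. Then G(t*) ≥ G(t) for all t ∈ C. In particular, the maximizing position t* (the point of C closest to the origin) can be chosen independently of the weights c (i.e., independently of the IRS–user channel). -/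
/-- Optimal single movable-antenna position: with gain
`G(t) = (∑_m c_m / √(‖t‖² + s_m))²`, any point `t*` of the antenna region `C`
that is closest to the origin (the IRS center) maximizes `G` over `C`,
regardless of the weights `c` (the IRS–user channel). -/
theorem optimal_antenna_position {ι : Type*} [Fintype ι] [Nonempty ι]
    (c s : ι → ℝ) (hc : ∀ m, 0 ≤ c m) (hs : ∀ m, 0 ≤ s m)
    (C : Set (EuclideanSpace ℝ (Fin 3))) (hC : C ⊆ {t | 0 < ‖t‖}) (hCne : C.Nonempty)
    (tstar : EuclideanSpace ℝ (Fin 3)) (htstar : tstar ∈ C)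
    (hmin : ∀ t ∈ C, ‖tstar‖ ≤ ‖t‖) :
    ∀ t ∈ C,
      (∑ m, c m / Real.sqrt (‖t‖ ^ 2 + s m)) ^ 2
        ≤ (∑ m, c m / Real.sqrt (‖tstar‖ ^ 2 + s m)) ^ 2 := by
  intro t ht
  have hts : 0 < ‖tstar‖ := hC htstar
  have hle : ‖tstar‖ ≤ ‖t‖ := hmin t ht
  have hsum : (∑ m, c m / Real.sqrt (‖t‖ ^ 2 + s m))
      ≤ ∑ m, c m / Real.sqrt (‖tstar‖ ^ 2 + s m) := by
    apply Finset.sum_le_sum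
    intro m _
    have hpos : 0 < Real.sqrt (‖tstar‖ ^ 2 + s m) :=
      Real.sqrt_pos.mpr (by nlinarith [hs m])
    have hsq : Real.sqrt (‖tstar‖ ^ 2 + s m) ≤ Real.sqrt (‖t‖ ^ 2 + s m) := by
      apply Real.sqrt_le_sqrt
      have : ‖tstar‖ ^ 2 ≤ ‖t‖ ^ 2 := by nlinarith [norm_nonneg tstar]
      linarith
    exact div_le_div_of_nonneg_left (hc m) hpos hsq |>.trans_eq rfl
      |> fun h => h
  have h0 : 0 ≤ ∑ m, c m / Real.sqrt (‖t‖ ^ 2 + s m) := by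
    apply Finset.sum_nonneg
    intro m _
    exact div_nonneg (hc m) (Real.sqrt_nonneg _)
  exact pow_le_pow_left₀ h0 hsum 2
end

section
/- Let I be a nonempty finite index set, let c : I → ℝ be nonnegative with c_m > 0 for at least one m, let s : I → ℝ be nonnegative, and let 0 ≤ δ₁ < δ₂. For d > 0 define H₁(d) = Σ_{m∈I} c_m/√(d² + δ₁² + s_m) and H₂(d) = Σ_{m∈I} c_m/√(d² + δ₂² + s_m). Then the function d ↦ H₁(d)² − H₂(d)² is strictly positive and strictly decreasing on (0,∞). -/
/-!
Write `uᵢ(d, m) = 1/√(d² + δᵢ² + s_m)`, so that `H₁² − H₂² = (H₁ − H₂)(H₁ + H₂)` with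
`H₁ ± H₂ = ∑ c_m (u₁ ± u₂)`. Both factors are positive, and both are strictly decreasing:
`H₁ + H₂` because each `uᵢ` is, and `H₁ − H₂` because
`1/√x − 1/√y = (y − x) / (√x √y (√x + √y))`, whose numerator `δ₂² − δ₁²` does not depend on `d`
while the denominator grows with `d`.
-/

open Real Set Finset

lemma sum_mul_lt_sum_mul {ι : Type*} [Fintype ι] {c f g : ι → ℝ} (hc : ∀ m, 0 ≤ c m)
    (hc' : ∃ m, 0 < c m) (hfg : ∀ m, f m < g m) : ∑ m, c m * f m < ∑ m, c m * g m := by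
  obtain ⟨m₀, hm₀⟩ := hc'
  exact Finset.sum_lt_sum (fun m _ => mul_le_mul_of_nonneg_left (hfg m).le (hc m))
    ⟨m₀, mem_univ m₀, mul_lt_mul_of_pos_left (hfg m₀) hm₀⟩

lemma strictAntiOn_sum_mul {ι α : Type*} [Fintype ι] [Preorder α] {S : Set α} {c : ι → ℝ}
    {f : ι → α → ℝ} (hc : ∀ m, 0 ≤ c m) (hc' : ∃ m, 0 < c m)
    (hf : ∀ m, StrictAntiOn (f m) S) : StrictAntiOn (fun x => ∑ m, c m * f m x) S :=
  fun _ hx _ hy hxy => sum_mul_lt_sum_mul hc hc' fun m => hf m hx hy hxy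

lemma StrictAntiOn.mul_of_nonneg {α : Type*} [Preorder α] {S : Set α} {f g : α → ℝ}
    (hf : StrictAntiOn f S) (hg : StrictAntiOn g S) (hf₀ : ∀ x ∈ S, 0 ≤ f x)
    (hg₀ : ∀ x ∈ S, 0 ≤ g x) : StrictAntiOn (fun x => f x * g x) S :=
  fun _ hx _ hy hxy => mul_lt_mul'' (hf hx hy hxy) (hg hx hy hxy) (hf₀ _ hy) (hg₀ _ hy)

lemma inv_sqrt_lt_inv_sqrt {x y : ℝ} (hx : 0 < x) (hxy : x < y) : (√y)⁻¹ < (√x)⁻¹ :=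
  (inv_lt_inv₀ (sqrt_pos.2 (hx.trans hxy)) (sqrt_pos.2 hx)).2 (sqrt_lt_sqrt hx.le hxy)

lemma inv_sqrt_sub_inv_sqrt {x y : ℝ} (hx : 0 < x) (hy : 0 < y) :
    (√x)⁻¹ - (√y)⁻¹ = (y - x) / (√x * √y * (√x + √y)) := by
  have hsx := sqrt_pos.2 hx
  have hsy := sqrt_pos.2 hy
  rw [← sq_sqrt hx.le, ← sq_sqrt hy.le]
  field_simp
  rw [sqrt_sq hsx.le, sqrt_sq hsy.le]
  ring

lemma strictAntiOn_inv_sqrt_sq_add {a : ℝ} (ha : 0 ≤ a) :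
    StrictAntiOn (fun d : ℝ => (√(d ^ 2 + a))⁻¹) (Ioi 0) := fun d (hd : 0 < d) _ _ hde =>
  inv_sqrt_lt_inv_sqrt (by positivity) (by gcongr)

lemma strictAntiOn_inv_sqrt_sq_add_sub {a b : ℝ} (ha : 0 ≤ a) (hab : a < b) :
    StrictAntiOn (fun d : ℝ => (√(d ^ 2 + a))⁻¹ - (√(d ^ 2 + b))⁻¹) (Ioi 0) := by
  intro d hd e he hde
  have hd : 0 < d := hd
  have he : 0 < e := he
  have hb : 0 ≤ b := ha.trans hab.le
  dsimp only
  rw [inv_sqrt_sub_inv_sqrt (by positivity) (by positivity),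
    inv_sqrt_sub_inv_sqrt (by positivity) (by positivity), add_sub_add_left_eq_sub,
    add_sub_add_left_eq_sub]
  have hsq : d ^ 2 < e ^ 2 := by gcongr
  have hA : √(d ^ 2 + a) < √(e ^ 2 + a) := sqrt_lt_sqrt (by positivity) (by linarith)
  have hB : √(d ^ 2 + b) < √(e ^ 2 + b) := sqrt_lt_sqrt (by positivity) (by linarith)
  have hA₀ : 0 < √(d ^ 2 + a) := sqrt_pos.2 (by positivity)
  have hB₀ : 0 < √(d ^ 2 + b) := sqrt_pos.2 (by positivity)
  apply div_lt_div_of_pos_left (sub_pos.2 hab) (by positivity)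
  exact mul_lt_mul'' (mul_lt_mul'' hA hB hA₀.le hB₀.le) (add_lt_add hA hB) (by positivity)
    (by positivity)

theorem gain_gap_pos_and_strictAnti_general {ι : Type*} [Fintype ι]
    (c s : ι → ℝ) (hc : ∀ m, 0 ≤ c m) (hc' : ∃ m, 0 < c m) (hs : ∀ m, 0 ≤ s m)
    (δ₁ δ₂ : ℝ) (hδ₁ : 0 ≤ δ₁) (hδ₁₂ : δ₁ < δ₂) :
    (∀ d ∈ Set.Ioi (0 : ℝ),
      0 < (∑ m, c m / Real.sqrt (d ^ 2 + δ₁ ^ 2 + s m)) ^ 2 -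
          (∑ m, c m / Real.sqrt (d ^ 2 + δ₂ ^ 2 + s m)) ^ 2) ∧
    StrictAntiOn
      (fun d : ℝ =>
        (∑ m, c m / Real.sqrt (d ^ 2 + δ₁ ^ 2 + s m)) ^ 2 -
        (∑ m, c m / Real.sqrt (d ^ 2 + δ₂ ^ 2 + s m)) ^ 2)
      (Set.Ioi 0) := by
  set u : ℝ → ℝ → ι → ℝ := fun δ d m => (√(d ^ 2 + (δ ^ 2 + s m)))⁻¹ with hu
  have hfactor : ∀ d : ℝ, (∑ m, c m / √(d ^ 2 + δ₁ ^ 2 + s m)) ^ 2 -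
      (∑ m, c m / √(d ^ 2 + δ₂ ^ 2 + s m)) ^ 2 =
      (∑ m, c m * (u δ₁ d m - u δ₂ d m)) * ∑ m, c m * (u δ₁ d m + u δ₂ d m) := by
    intro d
    simp only [hu, div_eq_mul_inv, add_assoc, mul_sub, mul_add, sum_sub_distrib,
      sum_add_distrib]
    ring
  have ha : ∀ m, 0 ≤ δ₁ ^ 2 + s m := fun m => add_nonneg (sq_nonneg δ₁) (hs m)
  have hab : ∀ m, δ₁ ^ 2 + s m < δ₂ ^ 2 + s m := fun m => by gcongr
  have hu_pos : ∀ δ, ∀ d ∈ Ioi (0 : ℝ), ∀ m, 0 < u δ d m := fun δ d (hd : 0 < d) m => by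
    have := hs m
    positivity
  have hgap_pos : ∀ d ∈ Ioi (0 : ℝ), 0 < ∑ m, c m * (u δ₁ d m - u δ₂ d m) :=
    fun d (hd : 0 < d) => by
      simpa using sum_mul_lt_sum_mul (f := 0) hc hc' fun m =>
        sub_pos.2 (inv_sqrt_lt_inv_sqrt (by linarith [ha m, pow_pos hd 2]) (by gcongr))
  have hsum_pos : ∀ d ∈ Ioi (0 : ℝ), 0 < ∑ m, c m * (u δ₁ d m + u δ₂ d m) := fun d hd => by
    simpa using sum_mul_lt_sum_mul (f := 0) hc hc' fun m =>
      add_pos (hu_pos δ₁ d hd m) (hu_pos δ₂ d hd m)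
  simp only [hfactor]
  refine ⟨fun d hd => mul_pos (hgap_pos d hd) (hsum_pos d hd), ?_⟩
  refine StrictAntiOn.mul_of_nonneg ?_ ?_ (fun d hd => (hgap_pos d hd).le)
    (fun d hd => (hsum_pos d hd).le)
  · exact strictAntiOn_sum_mul hc hc' fun m =>
      strictAntiOn_inv_sqrt_sq_add_sub (ha m) (hab m)
  · exact strictAntiOn_sum_mul hc hc' fun m =>
      (strictAntiOn_inv_sqrt_sq_add (ha m)).add
        (strictAntiOn_inv_sqrt_sq_add ((ha m).trans (hab m).le))

/-- The fluctuation of the channel power gain decreases with the BS–IRS distance: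
with `H₁(d) = ∑_m c_m/√(d² + δ₁² + s_m)` and `H₂(d) = ∑_m c_m/√(d² + δ₂² + s_m)`
for `0 ≤ δ₁ < δ₂`, the difference `H₁(d)² − H₂(d)²` is strictly positive and
strictly decreasing on `(0,∞)`. -/
theorem gain_gap_pos_and_strictAnti {ι : Type*} [Fintype ι] [Nonempty ι]
    (c s : ι → ℝ) (hc : ∀ m, 0 ≤ c m) (hc' : ∃ m, 0 < c m) (hs : ∀ m, 0 ≤ s m)
    (δ₁ δ₂ : ℝ) (hδ₁ : 0 ≤ δ₁) (hδ₁₂ : δ₁ < δ₂) :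
    (∀ d ∈ Set.Ioi (0 : ℝ),
      0 < (∑ m, c m / Real.sqrt (d ^ 2 + δ₁ ^ 2 + s m)) ^ 2 -
          (∑ m, c m / Real.sqrt (d ^ 2 + δ₂ ^ 2 + s m)) ^ 2) ∧
    StrictAntiOn
      (fun d : ℝ =>
        (∑ m, c m / Real.sqrt (d ^ 2 + δ₁ ^ 2 + s m)) ^ 2 -
        (∑ m, c m / Real.sqrt (d ^ 2 + δ₂ ^ 2 + s m)) ^ 2)
      (Set.Ioi 0) :=
  gain_gap_pos_and_strictAnti_general c s hc hc' hs δ₁ δ₂ hδ₁ hδ₁₂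
end

section
/- Let N, M be positive integers, v ∈ ℂ^N with |v_n| = 1 for every n, β ∈ ℂ, u ∈ ℂ^M, and g ∈ ℂ^M. Then the maximum over unit-norm vectors w ∈ ℂ^N of |g^H (β u v^H) w|² equals N·|β|²·|g^H u|², and it is attained at w = v/√N. In particular, the maximum value does not depend on v (beyond its entries having unit modulus). -/
/-!
Writing `c = β gᴴu`, the objective is `|c ⟪v, w⟫|²` for the inner product of `ℂᴺ`. By
Cauchy–Schwarz it is at most `|c|² ‖v‖²` on the unit sphere, with equality at `w = v / ‖v‖`, and
unit-modulus entries force `‖v‖² = N`, so the optimum sees `v` only through `N`.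
-/

open scoped InnerProductSpace ComplexConjugate

section CauchySchwarzExtremal

variable {𝕜 E : Type*} [RCLike 𝕜] [NormedAddCommGroup E] [InnerProductSpace 𝕜 E]

theorem inner_smul_inv_norm_self (x : E) : ⟪x, (‖x‖⁻¹ : 𝕜) • x⟫_𝕜 = ‖x‖ := by
  rw [inner_smul_right, inner_self_eq_norm_sq_to_K]
  rcases eq_or_ne ‖x‖ 0 with h | h
  · simp [h]
  · field_simp

theorem isGreatest_norm_mul_inner_sq (c : 𝕜) {x : E} (hx : x ≠ 0) :
    IsGreatest {r : ℝ | ∃ w : E, ‖w‖ = 1 ∧ r = ‖c * ⟪x, w⟫_𝕜‖ ^ 2} (‖c‖ ^ 2 * ‖x‖ ^ 2) := by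
  refine ⟨⟨(‖x‖⁻¹ : 𝕜) • x, norm_smul_inv_norm hx, ?_⟩, ?_⟩
  · rw [inner_smul_inv_norm_self, norm_mul, RCLike.norm_ofReal, abs_norm, mul_pow]
  · rintro r ⟨w, hw, rfl⟩
    have hle : ‖⟪x, w⟫_𝕜‖ ≤ ‖x‖ := by simpa [hw] using norm_inner_le_norm (𝕜 := 𝕜) x w
    rw [norm_mul, mul_pow]
    gcongr

end CauchySchwarzExtremal

namespace EuclideanSpace

variable {𝕜 ι : Type*} [RCLike 𝕜] [Fintype ι]

theorem sum_conj_mul_eq_inner (v : ι → 𝕜) (w : EuclideanSpace 𝕜 ι) :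
    ∑ i, conj (v i) * w i = ⟪WithLp.toLp 2 v, w⟫_𝕜 := by
  simp only [PiLp.inner_apply, RCLike.inner_apply']

theorem norm_toLp_of_forall_norm_eq_one {v : ι → 𝕜} (hv : ∀ i, ‖v i‖ = 1) :
    ‖(WithLp.toLp 2 v : EuclideanSpace 𝕜 ι)‖ = √(Fintype.card ι) := by
  simp [EuclideanSpace.norm_eq, hv]

end EuclideanSpace

theorem far_field_no_ma_gain_general (N M : ℕ) (hN : 0 < N)
    (v : Fin N → ℂ) (hv : ∀ n, ‖v n‖ = 1)
    (β : ℂ) (u g : Fin M → ℂ) :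
    IsGreatest
      {x : ℝ | ∃ w : EuclideanSpace ℂ (Fin N), ‖w‖ = 1 ∧
        x = ‖β * (∑ m, (starRingEnd ℂ) (g m) * u m) *
              (∑ n, (starRingEnd ℂ) (v n) * w n)‖ ^ 2}
      ((N : ℝ) * ‖β‖ ^ 2 * ‖∑ m, (starRingEnd ℂ) (g m) * u m‖ ^ 2) ∧
    (‖((WithLp.equiv 2 (Fin N → ℂ)).symm
          (fun n => v n / ((Real.sqrt N : ℝ) : ℂ)) : EuclideanSpace ℂ (Fin N))‖ = 1 ∧
      ‖β * (∑ m, (starRingEnd ℂ) (g m) * u m) *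
          (∑ n, (starRingEnd ℂ) (v n) * (v n / ((Real.sqrt N : ℝ) : ℂ)))‖ ^ 2
        = (N : ℝ) * ‖β‖ ^ 2 *
            ‖∑ m, (starRingEnd ℂ) (g m) * u m‖ ^ 2) := by
  set G := ∑ m, (starRingEnd ℂ) (g m) * u m
  set V : EuclideanSpace ℂ (Fin N) := WithLp.toLp 2 v
  have hV : ‖V‖ = √N := by
    simpa using EuclideanSpace.norm_toLp_of_forall_norm_eq_one hv
  have hV0 : V ≠ 0 := by
    rw [← norm_ne_zero_iff, hV]
    positivity
  have hvalue : (N : ℝ) * ‖β‖ ^ 2 * ‖G‖ ^ 2 = ‖β * G‖ ^ 2 * ‖V‖ ^ 2 := by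
    rw [hV, Real.sq_sqrt N.cast_nonneg, norm_mul]
    ring
  have hwitness : (WithLp.equiv 2 (Fin N → ℂ)).symm (fun n => v n / ((√N : ℝ) : ℂ))
      = (‖V‖⁻¹ : ℂ) • V := by
    ext n
    simp [hV, V, div_eq_inv_mul]
  have hsum : ∑ n, conj (v n) * (v n / ((√N : ℝ) : ℂ)) = ‖V‖ :=
    calc _ = ⟪V, (WithLp.equiv 2 (Fin N → ℂ)).symm (fun n => v n / ((√N : ℝ) : ℂ))⟫_ℂ :=
          EuclideanSpace.sum_conj_mul_eq_inner v _
      _ = ‖V‖ := by rw [hwitness]; exact inner_smul_inv_norm_self V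
  simp only [EuclideanSpace.sum_conj_mul_eq_inner v, hsum, hwitness, hvalue]
  refine ⟨isGreatest_norm_mul_inner_sq _ hV0, norm_smul_inv_norm hV0, ?_⟩
  rw [norm_mul, Complex.norm_real, norm_norm, mul_pow]

/-- Far-field result: for a rank-one channel `β u v^H` with `|v_n| = 1` for all `n`,
the maximum over unit-norm `w` of `|g^H (β u v^H) w|²` equals `N |β|² |g^H u|²`
(independently of `v`), and it is attained at `w = v/√N`. -/
theorem far_field_no_ma_gain (N M : ℕ) (hN : 0 < N) (hM : 0 < M)
    (v : Fin N → ℂ) (hv : ∀ n, ‖v n‖ = 1)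
    (β : ℂ) (u g : Fin M → ℂ) :
    IsGreatest
      {x : ℝ | ∃ w : EuclideanSpace ℂ (Fin N), ‖w‖ = 1 ∧
        x = ‖β * (∑ m, (starRingEnd ℂ) (g m) * u m) *
              (∑ n, (starRingEnd ℂ) (v n) * w n)‖ ^ 2}
      ((N : ℝ) * ‖β‖ ^ 2 * ‖∑ m, (starRingEnd ℂ) (g m) * u m‖ ^ 2) ∧
    (‖((WithLp.equiv 2 (Fin N → ℂ)).symm
          (fun n => v n / ((Real.sqrt N : ℝ) : ℂ)) : EuclideanSpace ℂ (Fin N))‖ = 1 ∧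
      ‖β * (∑ m, (starRingEnd ℂ) (g m) * u m) *
          (∑ n, (starRingEnd ℂ) (v n) * (v n / ((Real.sqrt N : ℝ) : ℂ)))‖ ^ 2
        = (N : ℝ) * ‖β‖ ^ 2 *
            ‖∑ m, (starRingEnd ℂ) (g m) * u m‖ ^ 2) :=
  far_field_no_ma_gain_general N M hN v hv β u g
end
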